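/- arXiv:1102.2689 — 6 statements merged into one kernel-verified Lean document; each statement's English description precedes it below -/
import Mathlib

section
/- Let v, w ∈ S_n. Then v ≤_L w if and only if for all (i,j) ∈ ninv(w) one has c_i(v) ≤ c_j(v) + m_{i,j}(w) (where c_{n+1}(v) = 0 by convention when j = n+1). -/
/-- The inversion set of `w`: pairs of positions `(i,j)` with `i < j` and `w i > w j`. -/
def Invs {n : ℕ} (w : Equiv.Perm (Fin n)) : Finset (Fin n × Fin n) :=
  Finset.univ.filter (fun p => p.1 < p.2 ∧ w p.2 < w p.1)

/-- The length (number of inversions) of `w`. -/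
def len {n : ℕ} (w : Equiv.Perm (Fin n)) : ℕ := (Invs w).card

/-- The `i`-th entry of the Lehmer code of `w`. -/
def lehmer {n : ℕ} (w : Equiv.Perm (Fin n)) (i : Fin n) : ℕ :=
  ((Invs w).filter (fun p => p.1 = i)).card

/-- The extended Lehmer code `m_{i,j}(w)`: the number of inversions `(i,k)` with `k < j`. -/
def mext {n : ℕ} (w : Equiv.Perm (Fin n)) (i : Fin n) (j : Fin (n + 1)) : ℕ :=
  ((Invs w).filter (fun p => p.1 = i ∧ (p.2 : ℕ) < (j : ℕ))).card

/-- The left weak order: `v ≤_L w` iff `inv(v) ⊆ inv(w)`. -/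
def leftWeak {n : ℕ} (v w : Equiv.Perm (Fin n)) : Prop := Invs v ⊆ Invs w

/-- The value of `w` extended to `Fin (n+1)` by fixing the last point
(the `1`-indexed convention `w(n+1) = n+1` becomes `wval w n = n` here). -/
def wval {n : ℕ} (w : Equiv.Perm (Fin n)) (j : Fin (n + 1)) : ℕ :=
  if h : (j : ℕ) < n then (w ⟨j, h⟩ : ℕ) else n

/-- The set of non-inversions of `w`: pairs `(i,j)` with `i ≤ j ≤ n+1` and `w i ≤ w j`,
where `w` is extended by fixing the last point. -/
def Ninvs {n : ℕ} (w : Equiv.Perm (Fin n)) : Finset (Fin n × Fin (n + 1)) :=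
  Finset.univ.filter (fun p => (p.1 : ℕ) ≤ (p.2 : ℕ) ∧ (w p.1 : ℕ) ≤ wval w p.2)

/-- The set of Lehmer codes of elements of the weak order interval `Λ_w = [id, w]`. -/
def codeSet {n : ℕ} (w : Equiv.Perm (Fin n)) : Set (Fin n → ℕ) :=
  {x | ∃ v : Equiv.Perm (Fin n), leftWeak v w ∧ lehmer v = x}

/-- The tuple `b_{i,x}(w)`: the `j`-th coordinate is `0` if `j < i` or `(i,j) ∈ inv(w)`,
and is `max {0, x - m_{i,j}(w)}` (truncated subtraction) if `j ≥ i` and `(i,j) ∈ ninv(w)`. -/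
def bmin {n : ℕ} (w : Equiv.Perm (Fin n)) (i : Fin n) (x : ℕ) : Fin n → ℕ :=
  fun j => if (i : ℕ) ≤ (j : ℕ) ∧ (w i : ℕ) ≤ (w j : ℕ) then x - mext w i j.castSucc else 0

/-- The set `M_w` of all `b_{i,x}(w)` for `1 ≤ x ≤ c_i(w)`. -/
def Mset {n : ℕ} (w : Equiv.Perm (Fin n)) : Set (Fin n → ℕ) :=
  {z | ∃ (i : Fin n) (x : ℕ), 1 ≤ x ∧ x ≤ lehmer w i ∧ z = bmin w i x}

/-- The direct sum `v × w ∈ S_{m+n}` of permutations. -/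
def dsum {m n : ℕ} (v : Equiv.Perm (Fin m)) (w : Equiv.Perm (Fin n)) :
    Equiv.Perm (Fin (m + n)) :=
  finSumFinEquiv.permCongr (Equiv.sumCongr v w)

/-- The Lehmer code of `v` extended by the convention `c_{n+1}(v) = 0`. -/
def lehmerExt {n : ℕ} (v : Equiv.Perm (Fin n)) (j : Fin (n + 1)) : ℕ :=
  if h : (j : ℕ) < n then lehmer v ⟨j, h⟩ else 0

/-!
Both directions compare the inversions of `v` at a position `i` with those of `w` and of `v`
at a later position `j`.

If `inv v ⊆ inv w` and `(i, j) ∈ ninv w`, every inversion `(i, k)` of `v` is an inversion of `w`;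
either `k < j`, counted by `m_{i,j}(w)`, or `k > j` and then `(j, k)` is an inversion of `v`,
since otherwise `(i, j)` would be one.

Conversely, take `(a, b) ∈ inv v \ inv w` with `a` maximal. Then `(a, b) ∈ ninv w`, every
inversion `(a, k)` of `w` with `k < b` is one of `v` by maximality of `a`, and `b` together
with the inversions `(b, k)` of `v` gives `c_b(v) + 1` further inversions `(a, k)` of `v` with
`k ≥ b`; so `c_a(v) > c_b(v) + m_{a,b}(w)`.
-/

section

variable {n : ℕ}

def invsAt (w : Equiv.Perm (Fin n)) (i : Fin n) : Finset (Fin n) :=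
  Finset.univ.filter fun k => i < k ∧ w k < w i

@[simp]
lemma mem_Invs (w : Equiv.Perm (Fin n)) (p : Fin n × Fin n) :
    p ∈ Invs w ↔ p.1 < p.2 ∧ w p.2 < w p.1 := by
  simp [Invs]

@[simp]
lemma mem_invsAt (w : Equiv.Perm (Fin n)) (i k : Fin n) :
    k ∈ invsAt w i ↔ (i, k) ∈ Invs w := by
  simp [invsAt]

lemma card_filter_Invs_fst_eq (w : Equiv.Perm (Fin n)) (i : Fin n) (P : Fin n → Prop)
    [DecidablePred P] :
    ((Invs w).filter fun p => p.1 = i ∧ P p.2).card = ((invsAt w i).filter P).card := by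
  refine Finset.card_nbij' Prod.snd (fun k => (i, k)) ?_ ?_ ?_ ?_
  · rintro ⟨a, k⟩ hp
    simp only [Finset.mem_coe, Finset.mem_filter] at hp ⊢
    obtain ⟨hinv, rfl, hP⟩ := hp
    exact ⟨(mem_invsAt w a k).2 hinv, hP⟩
  · intro k hk
    simp only [Finset.mem_coe, Finset.mem_filter, mem_invsAt] at hk ⊢
    exact ⟨hk.1, trivial, hk.2⟩
  · rintro ⟨a, k⟩ hp
    simp only [Finset.mem_coe, Finset.mem_filter] at hp
    simp [hp.2.1]
  · intro k _
    rfl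

lemma lehmer_eq_card_invsAt (w : Equiv.Perm (Fin n)) (i : Fin n) :
    lehmer w i = (invsAt w i).card := by
  simpa [lehmer] using card_filter_Invs_fst_eq w i (fun _ => True)

lemma mext_eq_card_filter_invsAt (w : Equiv.Perm (Fin n)) (i : Fin n) (j : Fin (n + 1)) :
    mext w i j = ((invsAt w i).filter fun k : Fin n => (k : ℕ) < j).card :=
  card_filter_Invs_fst_eq w i (fun k : Fin n => (k : ℕ) < j)

@[simp]
lemma mext_last (w : Equiv.Perm (Fin n)) (i : Fin n) : mext w i (Fin.last n) = lehmer w i := by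
  simp [mext_eq_card_filter_invsAt, lehmer_eq_card_invsAt]

@[simp]
lemma lehmerExt_castSucc (v : Equiv.Perm (Fin n)) (j : Fin n) :
    lehmerExt v j.castSucc = lehmer v j := by
  simp [lehmerExt]

@[simp]
lemma lehmerExt_last (v : Equiv.Perm (Fin n)) : lehmerExt v (Fin.last n) = 0 := by
  simp [lehmerExt]

lemma mk_castSucc_mem_Ninvs_iff (w : Equiv.Perm (Fin n)) (i j : Fin n) :
    (i, j.castSucc) ∈ Ninvs w ↔ i ≤ j ∧ w i ≤ w j := by
  unfold Ninvs
  rw [Finset.mem_filter]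
  simp only [Finset.mem_univ, true_and, wval, Fin.val_castSucc, j.isLt, dite_true, Fin.eta,
    Fin.le_def]

lemma lehmer_le_lehmer_of_leftWeak {v w : Equiv.Perm (Fin n)} (h : leftWeak v w) (i : Fin n) :
    lehmer v i ≤ lehmer w i := by
  simp only [lehmer_eq_card_invsAt]
  exact Finset.card_le_card fun k hk => (mem_invsAt w i k).2 (h ((mem_invsAt v i k).1 hk))

lemma invsAt_subset_of_leftWeak {v w : Equiv.Perm (Fin n)} (h : leftWeak v w) {i j : Fin n}
    (hij : i ≤ j) (hw : w i ≤ w j) :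
    invsAt v i ⊆
      (invsAt w i).filter (fun k : Fin n => (k : ℕ) < (j.castSucc : ℕ)) ∪ invsAt v j := by
  intro k hk
  have hvk : (i, k) ∈ Invs v := (mem_invsAt v i k).1 hk
  have hwk := (mem_Invs w (i, k)).1 (h hvk)
  rw [mem_Invs] at hvk
  simp only [Finset.mem_union, Finset.mem_filter, mem_invsAt, mem_Invs, Fin.val_castSucc]
  rcases lt_or_ge (k : ℕ) j with hkj | hjk
  · exact Or.inl ⟨⟨hvk.1, hwk.2⟩, hkj⟩
  · right
    have hjk : j < k := lt_of_le_of_ne (Fin.le_def.2 hjk) (by rintro rfl; exact not_le.2 hwk.2 hw)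
    refine ⟨hjk, not_le.1 fun hvjk => ?_⟩
    have hvij : v j < v i := hvjk.trans_lt hvk.2
    have hij' : i < j := lt_of_le_of_ne hij (by rintro rfl; exact lt_irrefl _ hvij)
    have hwij := (mem_Invs w (i, j)).1 (h ((mem_Invs v (i, j)).2 ⟨hij', hvij⟩))
    exact not_le.2 hwij.2 hw

lemma lehmer_le_lehmerExt_add_mext_of_leftWeak {v w : Equiv.Perm (Fin n)} (h : leftWeak v w)
    {p : Fin n × Fin (n + 1)} (hp : p ∈ Ninvs w) :
    lehmer v p.1 ≤ lehmerExt v p.2 + mext w p.1 p.2 := by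
  obtain ⟨i, j⟩ := p
  induction j using Fin.lastCases with
  | last => simpa using lehmer_le_lehmer_of_leftWeak h i
  | cast j =>
    obtain ⟨hij, hw⟩ := (mk_castSucc_mem_Ninvs_iff w i j).1 hp
    simp only [lehmerExt_castSucc, lehmer_eq_card_invsAt, mext_eq_card_filter_invsAt]
    rw [add_comm]
    exact (Finset.card_le_card (invsAt_subset_of_leftWeak h hij hw)).trans
      (Finset.card_union_le _ _)

lemma lehmer_lt_card_filter_invsAt {v : Equiv.Perm (Fin n)} {a b : Fin n}
    (hab : (a, b) ∈ Invs v) :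
    lehmer v b < ((invsAt v a).filter fun k : Fin n => ¬ (k : ℕ) < b).card := by
  rw [mem_Invs] at hab
  rw [lehmer_eq_card_invsAt, Nat.lt_iff_add_one_le, ← Finset.card_insert_of_notMem
    (by simp : b ∉ invsAt v b)]
  refine Finset.card_le_card (Finset.insert_subset ?_ fun k hk => ?_)
  · simpa using hab
  · have hk := (mem_Invs v _).1 ((mem_invsAt v b k).1 hk)
    simp only [Finset.mem_filter, mem_invsAt, mem_Invs, not_lt]
    exact ⟨⟨hab.1.trans hk.1, hk.2.trans hab.2⟩, hk.1.le⟩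

lemma lehmer_add_mext_lt_of_maximal {v w : Equiv.Perm (Fin n)} {a b : Fin n}
    (habv : (a, b) ∈ Invs v) (habw : (a, b) ∉ Invs w)
    (hmax : ∀ k, a < k → (k, b) ∈ Invs v → (k, b) ∈ Invs w) :
    lehmer v b + mext w a b.castSucc < lehmer v a := by
  have hle : mext w a b.castSucc ≤ ((invsAt v a).filter fun k : Fin n => (k : ℕ) < b).card := by
    rw [mext_eq_card_filter_invsAt]
    refine Finset.card_le_card fun k hk => ?_
    simp only [Finset.mem_filter, mem_invsAt, mem_Invs, Fin.val_castSucc] at hk habv habw ⊢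
    refine ⟨⟨hk.1.1, not_le.1 fun hvk => ?_⟩, hk.2⟩
    have hkb := (mem_Invs w _).1 <| hmax k hk.1.1 <|
      (mem_Invs v _).2 ⟨Fin.lt_def.2 hk.2, habv.2.trans_le hvk⟩
    exact habw ⟨habv.1, hkb.2.trans hk.1.2⟩
  have := lehmer_lt_card_filter_invsAt habv
  rw [lehmer_eq_card_invsAt v a, ← Finset.card_filter_add_card_filter_not (s := invsAt v a)
    (p := fun k : Fin n => (k : ℕ) < b)]
  omega

lemma exists_maximal_of_not_leftWeak {v w : Equiv.Perm (Fin n)} (h : ¬ leftWeak v w) :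
    ∃ a b : Fin n, (a, b) ∈ Invs v ∧ (a, b) ∉ Invs w ∧
      ∀ k, a < k → (k, b) ∈ Invs v → (k, b) ∈ Invs w := by
  obtain ⟨⟨a, b⟩, hmem, hmax⟩ := Finset.exists_max_image (Invs v \ Invs w) Prod.fst
    (Finset.sdiff_nonempty.2 h)
  rw [Finset.mem_sdiff] at hmem
  refine ⟨a, b, hmem.1, hmem.2, fun k hak hkv => by_contra fun hkw => ?_⟩
  exact absurd (hmax (k, b) (Finset.mem_sdiff.2 ⟨hkv, hkw⟩)) (not_le.2 hak)

end

/-- Proposition 2.8: `v ≤_L w` iff for all `(i,j) ∈ ninv(w)` one has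
`c_i(v) ≤ c_j(v) + m_{i,j}(w)` (with `c_{n+1}(v) = 0` when `j = n+1`). -/
theorem weakEquivalence {n : ℕ} (v w : Equiv.Perm (Fin n)) :
    leftWeak v w ↔
      ∀ p : Fin n × Fin (n + 1), p ∈ Ninvs w →
        lehmer v p.1 ≤ lehmerExt v p.2 + mext w p.1 p.2 := by
  refine ⟨fun h p hp => lehmer_le_lehmerExt_add_mext_of_leftWeak h hp, fun H => ?_⟩
  by_contra h
  obtain ⟨a, b, habv, habw, hmax⟩ := exists_maximal_of_not_leftWeak h
  have hab : a ≤ b ∧ w a ≤ w b := by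
    rw [mem_Invs] at habv habw
    exact ⟨habv.1.le, not_lt.1 fun hw => habw ⟨habv.1, hw⟩⟩
  have := H (a, b.castSucc) ((mk_castSucc_mem_Ninvs_iff w a b).2 hab)
  rw [lehmerExt_castSucc] at this
  exact absurd this (not_le.2 (lehmer_add_mext_lt_of_maximal habv habw hmax))
end

section
/- Let w ∈ S_n and let u_1, u_2 ∈ S_n with u_1 ≤_L w and u_2 ≤_L w. Then there exists v ∈ S_n with v ≤_L w whose Lehmer code is the coordinatewise maximum: c(v) = c(u_1) ∨ c(u_2). That is, the set c(Λ_w) ⊆ ℕ^n is closed under the coordinatewise join of ℕ^n. -/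
/-!
A permutation `v` lies below `w` in the left weak order iff its Lehmer code `x = c(v)` satisfies
`x_i ≤ m_{i,j}(w) + x_j` for every non-inversion `i < j` of `w`, where `m_{i,j}(w)` counts the
inversions `(i, l)` of `w` with `l < j`. These inequalities survive a coordinatewise maximum, and
so does the staircase bound `x_i < n - i` satisfied by every code. The characterization also shows
that two permutations with the same code lie below each other, hence coincide; by counting, the
Lehmer code is then a bijection onto staircase tuples, so `c(u₁) ∨ c(u₂)` is the code of some
`v ≤_L w`.
-/

open Finset

namespace Equiv.Perm

variable {n : ℕ} {v w : Perm (Fin n)} {i j : Fin n}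

def lehmerSet (v : Perm (Fin n)) (i : Fin n) : Finset (Fin n) :=
  univ.filter fun l => i < l ∧ v l < v i

@[simp]
theorem mem_lehmerSet {l : Fin n} : l ∈ lehmerSet v i ↔ i < l ∧ v l < v i := by
  simp [lehmerSet]

theorem mem_Invs : (i, j) ∈ Invs v ↔ i < j ∧ v j < v i := by
  simp [Invs]

theorem lehmer_eq_card_lehmerSet (v : Perm (Fin n)) (i : Fin n) :
    lehmer v i = #(lehmerSet v i) := by
  have hmap : (Invs v).filter (·.1 = i) =
      (lehmerSet v i).map ⟨Prod.mk i, Prod.mk_right_injective i⟩ := by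
    ext ⟨a, b⟩
    simp only [Invs, lehmerSet, mem_filter, mem_univ, true_and, mem_map,
      Function.Embedding.coeFn_mk, Prod.mk.injEq]
    grind
  rw [lehmer, hmap, card_map]

theorem lehmer_add_lt (v : Perm (Fin n)) (i : Fin n) : lehmer v i + i < n := by
  have hsub : lehmerSet v i ⊆ Ioi i := fun l hl => mem_Ioi.2 (mem_lehmerSet.1 hl).1
  have hcard := card_le_card hsub
  rw [Fin.card_Ioi] at hcard
  rw [lehmer_eq_card_lehmerSet]
  omega

theorem lehmerSet_mono (h : leftWeak v w) : lehmerSet v i ⊆ lehmerSet w i := fun _ hl =>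
  mem_lehmerSet.2 (mem_Invs.1 (h (mem_Invs.2 (mem_lehmerSet.1 hl))))

theorem lehmerSet_filter_not_lt_subset (h : v i ≤ v j) :
    (lehmerSet v i).filter (fun l => ¬ l < j) ⊆ lehmerSet v j := by
  intro l hl
  simp only [mem_filter, mem_lehmerSet, not_lt] at hl ⊢
  obtain ⟨⟨-, hvl⟩, hjl⟩ := hl
  have hvlj := hvl.trans_le h
  exact ⟨hjl.lt_of_ne (by rintro rfl; exact hvlj.false), hvlj⟩

theorem insert_lehmerSet_subset_filter_not_lt (hij : i < j) (hv : v j < v i) :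
    insert j (lehmerSet v j) ⊆ (lehmerSet v i).filter (fun l => ¬ l < j) := by
  intro l hl
  simp only [mem_insert, mem_filter, mem_lehmerSet, not_lt] at hl ⊢
  rcases hl with rfl | ⟨hjl, hvl⟩
  · exact ⟨⟨hij, hv⟩, le_rfl⟩
  · exact ⟨⟨hij.trans hjl, hvl.trans hv⟩, hjl.le⟩

/-- `#((lehmerSet w i).filter (· < j))` is the extended Lehmer code `mext w i j.castSucc`. -/
def NoninvBound (w : Perm (Fin n)) (x : Fin n → ℕ) : Prop :=
  ∀ ⦃i j : Fin n⦄, i < j → w i < w j → x i ≤ #((lehmerSet w i).filter (· < j)) + x j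

theorem NoninvBound.max {x y : Fin n → ℕ} (hx : NoninvBound w x) (hy : NoninvBound w y) :
    NoninvBound w fun i => max (x i) (y i) := fun _ _ hij hw =>
  max_le ((hx hij hw).trans (by gcongr; exact le_max_left _ _))
    ((hy hij hw).trans (by gcongr; exact le_max_right _ _))

theorem noninvBound_lehmer (h : leftWeak v w) : NoninvBound w (lehmer v) := by
  intro i j hij hw
  have hvij : v i ≤ v j :=
    not_lt.1 fun hv => (mem_Invs.1 (h (mem_Invs.2 ⟨hij, hv⟩))).2.asymm hw
  rw [lehmer_eq_card_lehmerSet, lehmer_eq_card_lehmerSet,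
    ← card_filter_add_card_filter_not (s := lehmerSet v i) (· < j)]
  exact add_le_add (card_le_card (filter_subset_filter _ (lehmerSet_mono h)))
    (card_le_card (lehmerSet_filter_not_lt_subset hvij))

theorem leftWeak_of_noninvBound (h : NoninvBound w (lehmer v)) : leftWeak v w := by
  rintro ⟨k, q⟩ hkq
  -- Downward induction on `k`: an `l ∈ (k, q)` counted by `w` but not by `v` would give an
  -- inversion `(l, q)` of `v` that is not one of `w`.
  induction k using WellFoundedGT.induction generalizing q with
  | _ k ih =>
  obtain ⟨hkq, hvqk⟩ := mem_Invs.1 hkq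
  refine mem_Invs.2 ⟨hkq, not_le.1 fun hwqk => ?_⟩
  have hwkq : w k < w q := hwqk.lt_of_ne (w.injective.ne hkq.ne)
  have hprefix : (lehmerSet w k).filter (· < q) ⊆ (lehmerSet v k).filter (· < q) := by
    intro l hl
    simp only [mem_filter, mem_lehmerSet] at hl ⊢
    obtain ⟨⟨hkl, hwl⟩, hlq⟩ := hl
    refine ⟨⟨hkl, not_le.1 fun hvlk => ?_⟩, hlq⟩
    have hvkl : v k < v l := hvlk.lt_of_ne (v.injective.ne hkl.ne)
    have hwql := (mem_Invs.1 (ih l hkl q (mem_Invs.2 ⟨hlq, hvqk.trans hvkl⟩))).2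
    exact (hwql.trans hwl).asymm hwkq
  have hsuffix := card_le_card (insert_lehmerSet_subset_filter_not_lt hkq hvqk)
  rw [card_insert_of_notMem (by simp)] at hsuffix
  have hbound := h hkq hwkq
  rw [lehmer_eq_card_lehmerSet, lehmer_eq_card_lehmerSet] at hbound
  have hsplit := card_filter_add_card_filter_not (s := lehmerSet v k) (· < q)
  have := card_le_card hprefix
  omega

theorem apply_lt_apply_iff_Invs (v : Perm (Fin n)) (k i : Fin n) :
    v k < v i ↔ k < i ∧ (k, i) ∉ Invs v ∨ i < k ∧ (i, k) ∈ Invs v := by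
  rcases lt_trichotomy k i with hki | rfl | hik
  · simp [mem_Invs, hki, hki.not_gt, (v.injective.ne hki.ne).le_iff_lt]
  · simp
  · simp [mem_Invs, hik, hik.not_gt]

theorem val_apply_eq_card (v : Perm (Fin n)) (i : Fin n) :
    (v i : ℕ) = #(univ.filter fun k => v k < v i) := by
  rw [card_equiv v (t := Iio (v i)) (by simp), Fin.card_Iio]

theorem Invs_injective : Function.Injective (Invs (n := n)) := by
  intro u v h
  refine Equiv.ext fun i => Fin.ext ?_
  simp_rw [val_apply_eq_card, apply_lt_apply_iff_Invs, h]

theorem lehmer_injective : Function.Injective (lehmer (n := n)) := by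
  have hle : ∀ {u v : Perm (Fin n)}, lehmer u = lehmer v → leftWeak u v := fun h =>
    leftWeak_of_noninvBound (h ▸ noninvBound_lehmer (subset_refl _))
  exact fun u v h => Invs_injective (subset_antisymm (hle h) (hle h.symm))

theorem exists_lehmer_eq {x : Fin n → ℕ} (hx : ∀ i, x i + i < n) :
    ∃ v : Perm (Fin n), lehmer v = x := by
  let code : Perm (Fin n) → ∀ i : Fin n, Fin (n - i) := fun v i =>
    ⟨lehmer v i, by have := lehmer_add_lt v i; omega⟩
  have hcode : code.Bijective := by
    refine (Fintype.bijective_iff_injective_and_card code).2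
      ⟨fun u v h => lehmer_injective (funext fun i => congrArg Fin.val (congrFun h i)), ?_⟩
    simp only [Fintype.card_perm, Fintype.card_pi, Fintype.card_fin]
    rw [Fin.prod_univ_eq_prod_range (n - ·), ← Nat.descFactorial_eq_prod_range,
      Nat.descFactorial_self]
  obtain ⟨v, hv⟩ := hcode.2 fun i => ⟨x i, by have := hx i; omega⟩
  exact ⟨v, funext fun i => congrArg Fin.val (congrFun hv i)⟩

end Equiv.Perm

/-- Lemma 3.1 (join half): if `u₁ ≤_L w` and `u₂ ≤_L w`, then there is `v ≤_L w` whose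
Lehmer code is the coordinatewise maximum `c(u₁) ⊔ c(u₂)`; i.e. `c(Λ_w)` is closed under
the join of `ℕ^n`. -/
theorem codeSet_join_closed {n : ℕ} (w u₁ u₂ : Equiv.Perm (Fin n))
    (h₁ : leftWeak u₁ w) (h₂ : leftWeak u₂ w) :
    ∃ v : Equiv.Perm (Fin n), leftWeak v w ∧
      lehmer v = (fun i => max (lehmer u₁ i) (lehmer u₂ i)) := by
  have hstair (i : Fin n) : max (lehmer u₁ i) (lehmer u₂ i) + i < n := by
    have := u₁.lehmer_add_lt i
    have := u₂.lehmer_add_lt i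
    omega
  obtain ⟨v, hv⟩ := Equiv.Perm.exists_lehmer_eq hstair
  have hbound := (Equiv.Perm.noninvBound_lehmer h₁).max (Equiv.Perm.noninvBound_lehmer h₂)
  exact ⟨v, Equiv.Perm.leftWeak_of_noninvBound (hv ▸ hbound), hv⟩
end

section
/- Let w ∈ S_n, let 1 ≤ i ≤ n and 1 ≤ x ≤ c_i(w). Then b_{i,x}(w) ∈ c(Λ_w); that is, there exists v ∈ S_n with v ≤_L w and c(v) = b_{i,x}(w). -/
open Finset

section InitialSegment

variable {α : Type*} [LinearOrder α]

theorem Finset.exists_subset_card_eq_of_lowerClosed (S : Finset α) {x : ℕ} (hx : x ≤ #S) :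
    ∃ T ⊆ S, #T = x ∧ ∀ a ∈ S, ∀ b ∈ T, a < b → a ∈ T := by
  induction S using Finset.induction_on_max generalizing x with
  | empty => exact ⟨∅, subset_rfl, by simp_all, by simp⟩
  | insert m S hlt ih =>
    have hm : m ∉ S := fun h => lt_irrefl m (hlt m h)
    rw [card_insert_of_notMem hm] at hx
    rcases Nat.lt_or_eq_of_le hx with hx | rfl
    · obtain ⟨T, hTS, hcard, hdown⟩ := ih (Nat.le_of_lt_succ hx)
      refine ⟨T, hTS.trans (subset_insert m S), hcard, fun a ha b hb hab => ?_⟩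
      rcases mem_insert.1 ha with rfl | ha
      · exact absurd (hlt b (hTS hb)) (lt_asymm hab)
      · exact hdown a ha b hb hab
    · exact ⟨insert m S, subset_rfl, card_insert_of_notMem hm, fun a ha _ _ _ => ha⟩

variable {S T : Finset α} {j : α}

theorem Finset.filter_gt_eq_empty_of_lowerClosed (hdown : ∀ a ∈ S, ∀ b ∈ T, a < b → a ∈ T)
    (hjS : j ∈ S) (hjT : j ∉ T) : T.filter (j < ·) = ∅ :=
  filter_eq_empty_iff.2 fun b hb hjb => hjT (hdown j hjS b hb hjb)

theorem Finset.card_filter_gt_of_lowerClosed (hTS : T ⊆ S)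
    (hdown : ∀ a ∈ S, ∀ b ∈ T, a < b → a ∈ T) (hjT : j ∉ T) :
    #(T.filter (j < ·)) = #T - #(S.filter (· < j)) := by
  by_cases h : ∃ b ∈ T, j < b
  · obtain ⟨b, hb, hjb⟩ := h
    have hsub : S.filter (· < j) ⊆ T := fun a ha =>
      hdown a (mem_filter.1 ha).1 b hb ((mem_filter.1 ha).2.trans hjb)
    rw [← card_sdiff_of_subset hsub]
    congr 1
    ext c
    simp only [mem_filter, mem_sdiff, not_and, not_lt]
    exact ⟨fun ⟨hc, hjc⟩ => ⟨hc, fun _ => hjc.le⟩,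
      fun ⟨hc, hcj⟩ => ⟨hc, lt_of_le_of_ne (hcj (hTS hc)) (ne_of_mem_of_not_mem hc hjT).symm⟩⟩
  · push Not at h
    have hsub : T ⊆ S.filter (· < j) := fun b hb =>
      mem_filter.2 ⟨hTS hb, lt_of_le_of_ne (h b hb) (ne_of_mem_of_not_mem hb hjT)⟩
    rw [filter_false_of_mem fun b hb => (h b hb).not_gt, card_empty, Nat.sub_eq_zero_of_le (card_le_card hsub)]

end InitialSegment

variable {n : ℕ}

theorem exists_perm_lt_iff_lt {α : Type*} [LinearOrder α] {f : Fin n → α}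
    (hf : Function.Injective f) : ∃ v : Equiv.Perm (Fin n), ∀ a b, v a < v b ↔ f a < f b := by
  have hmono : StrictMono (f ∘ Tuple.sort f) :=
    (Tuple.monotone_sort f).strictMono_of_injective (hf.comp (Tuple.sort f).injective)
  refine ⟨(Tuple.sort f)⁻¹, fun a b => ?_⟩
  rw [← hmono.lt_iff_lt]
  simp

theorem exists_invs_eq_partition (P : Fin n → Prop) [DecidablePred P] :
    ∃ v : Equiv.Perm (Fin n), ∀ a b, (a, b) ∈ Invs v ↔ a < b ∧ P a ∧ ¬ P b := by
  obtain ⟨v, hv⟩ := exists_perm_lt_iff_lt (f := fun j => toLex (decide (P j), j))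
    fun a b h => (Prod.ext_iff.1 h).2
  refine ⟨v, fun a b => ?_⟩
  simp only [Invs, mem_filter, mem_univ, true_and, hv, Prod.Lex.toLex_lt_toLex, Bool.lt_iff,
    decide_eq_false_iff_not, decide_eq_true_eq]
  constructor
  · rintro ⟨hab, hba | ⟨-, hba⟩⟩
    · exact ⟨hab, hba.2, hba.1⟩
    · exact absurd hba (lt_asymm hab)
  · rintro ⟨hab, ha, hb⟩
    exact ⟨hab, Or.inl ⟨hb, ha⟩⟩

def invPartners (w : Equiv.Perm (Fin n)) (i : Fin n) : Finset (Fin n) :=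
  univ.filter fun k => (i, k) ∈ Invs w

@[simp]
theorem mem_invPartners {w : Equiv.Perm (Fin n)} {i k : Fin n} :
    k ∈ invPartners w i ↔ i < k ∧ w k < w i := by
  simp [invPartners, Invs]

theorem filter_invs_eq_map (w : Equiv.Perm (Fin n)) (i : Fin n) (q : Fin n → Prop)
    [DecidablePred q] :
    (Invs w).filter (fun p => p.1 = i ∧ q p.2) =
      ((invPartners w i).filter q).map ⟨Prod.mk i, Prod.mk_right_injective i⟩ := by
  ext ⟨a, b⟩
  simp only [mem_filter, mem_map, mem_invPartners, Function.Embedding.coeFn_mk, Prod.mk.injEq,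
    Invs, mem_univ, true_and]
  constructor
  · rintro ⟨h, rfl, hq⟩
    exact ⟨b, ⟨h, hq⟩, rfl, rfl⟩
  · rintro ⟨b, ⟨h, hq⟩, rfl, rfl⟩
    exact ⟨h, rfl, hq⟩

theorem lehmer_eq_card_invPartners (w : Equiv.Perm (Fin n)) (i : Fin n) :
    lehmer w i = #(invPartners w i) := by
  simpa [lehmer] using congrArg card (filter_invs_eq_map w i fun _ => True)

theorem mext_castSucc_eq_card (w : Equiv.Perm (Fin n)) (i j : Fin n) :
    mext w i j.castSucc = #((invPartners w i).filter (· < j)) := by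
  rw [mext, filter_invs_eq_map w i (fun k => (k : ℕ) < j.castSucc), card_map]
  rfl

section Witness

variable {w v : Equiv.Perm (Fin n)} {i : Fin n} {T : Finset (Fin n)}
  (hTS : T ⊆ invPartners w i)
  (hdown : ∀ a ∈ invPartners w i, ∀ b ∈ T, a < b → a ∈ T)
  (hv : ∀ a b, (a, b) ∈ Invs v ↔ a < b ∧ i ≤ a ∧ a ∉ T ∧ b ∈ T)
include hTS hdown hv

theorem leftWeak_of_invs : leftWeak v w := by
  rintro ⟨a, b⟩ hab
  obtain ⟨hlt, hia, haT, hbT⟩ := (hv a b).1 hab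
  have hwb : w b < w i := (mem_invPartners.1 (hTS hbT)).2
  refine mem_filter.2 ⟨mem_univ _, hlt, ?_⟩
  rcases hia.eq_or_lt with rfl | hia
  · exact hwb
  · have ha : a ∉ invPartners w i := fun ha => haT (hdown a ha b hbT hlt)
    rw [mem_invPartners, not_and, not_lt] at ha
    exact hwb.trans_le (ha hia)

theorem lehmer_of_invs : lehmer v = bmin w i #T := by
  funext j
  have hpart : invPartners v j = if i ≤ j ∧ j ∉ T then T.filter (j < ·) else ∅ := by
    ext b
    simp only [invPartners, mem_filter, mem_univ, true_and, hv]
    split_ifs with h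
    · simp [h, and_comm]
    · simp only [notMem_empty, iff_false]
      exact fun hb => h ⟨hb.2.1, hb.2.2.1⟩
  rw [lehmer_eq_card_invPartners, hpart, bmin, mext_castSucc_eq_card]
  simp only [Fin.val_fin_le]
  by_cases hij : i ≤ j
  swap
  · simp [hij]
  by_cases hjT : j ∈ T
  · have hwj : w j < w i := (mem_invPartners.1 (hTS hjT)).2
    simp [hjT, hwj.not_ge]
  by_cases hw : w i ≤ w j
  · rw [if_pos ⟨hij, hjT⟩, if_pos ⟨hij, hw⟩]
    exact card_filter_gt_of_lowerClosed hTS hdown hjT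
  · have hjS : j ∈ invPartners w i :=
      mem_invPartners.2 ⟨lt_of_le_of_ne hij (by rintro rfl; exact hw le_rfl), not_le.1 hw⟩
    rw [if_pos ⟨hij, hjT⟩, if_neg fun h => hw h.2,
      filter_gt_eq_empty_of_lowerClosed hdown hjS hjT, card_empty]

end Witness

theorem bmin_mem_codeSet_general {n : ℕ} (w : Equiv.Perm (Fin n)) (i : Fin n) (x : ℕ)
    (hx2 : x ≤ lehmer w i) :
    ∃ v : Equiv.Perm (Fin n), leftWeak v w ∧ lehmer v = bmin w i x := by
  rw [lehmer_eq_card_invPartners] at hx2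
  obtain ⟨T, hTS, rfl, hdown⟩ := exists_subset_card_eq_of_lowerClosed _ hx2
  obtain ⟨v, hv⟩ := exists_invs_eq_partition fun j => i ≤ j ∧ j ∉ T
  have hv' : ∀ a b, (a, b) ∈ Invs v ↔ a < b ∧ i ≤ a ∧ a ∉ T ∧ b ∈ T := by
    intro a b
    rw [hv]
    constructor
    · rintro ⟨hab, ⟨hia, haT⟩, hb⟩
      exact ⟨hab, hia, haT, by_contra fun hbT => hb ⟨hia.trans hab.le, hbT⟩⟩
    · rintro ⟨hab, hia, haT, hbT⟩
      exact ⟨hab, ⟨hia, haT⟩, fun h => h.2 hbT⟩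
  exact ⟨v, leftWeak_of_invs hTS hdown hv', lehmer_of_invs hTS hdown hv'⟩

/-- Lemma 4.3: for `i ∈ [n]` and `1 ≤ x ≤ c_i(w)`, the tuple `b_{i,x}(w)` lies in
`c(Λ_w)`; i.e. there is `v ≤_L w` with `c(v) = b_{i,x}(w)`. -/
theorem bmin_mem_codeSet {n : ℕ} (w : Equiv.Perm (Fin n)) (i : Fin n) (x : ℕ)
    (hx1 : 1 ≤ x) (hx2 : x ≤ lehmer w i) :
    ∃ v : Equiv.Perm (Fin n), leftWeak v w ∧ lehmer v = bmin w i x :=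
  bmin_mem_codeSet_general w i x hx2
end

section
/- Let w ∈ S_n, let 1 ≤ i ≤ n and 1 ≤ x ≤ c_i(w). Then for every y ∈ c(Λ_w) whose i-th coordinate equals x, one has b_{i,x}(w) ≤ y in the product order. Hence b_{i,x}(w) is the unique minimal element of c(Λ_w) with i-th coordinate equal to x. -/
/-!
Write `S = invSet w i = {k > i | w k < w i}`, so that `c_i(w) = #S` and
`m_{i,j}(w) = #{k ∈ S | k < j}`.

Lower bound: let `v ≤_L w` and let `(i,j)` be a non-inversion of `w` with `i ≤ j`. Every inversion
`(i,k)` of `v` is one of `w`; either `k < j`, and it is counted by `m_{i,j}(w)`, or `k > j`, and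
then `v k < v i ≤ v j`, so `(j,k)` is an inversion of `v`. Hence `c_i(v) ≤ c_j(v) + m_{i,j}(w)`.

Attainment: let `A = invSetBelow w i t` be the first `x` elements of `S`, those below a threshold
`t`. Let `v` order the positions naturally, except that those of `A` are moved, in order, to just
before `i`. The inversions of `v` are the `(p,q)` with `q ∈ A`, `p ∉ A`, `i ≤ p`; they are
inversions of `w`, and counting them gives `c(v) = b_{i,x}(w)`.
-/

open Finset

lemma Nat.exists_eq_of_le_of_succ_le_add_one {f : ℕ → ℕ} (h0 : f 0 = 0)
    (hf : ∀ t, f (t + 1) ≤ f t + 1) {m x : ℕ} (hx : x ≤ f m) : ∃ t, f t = x := by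
  induction m with
  | zero => exact ⟨0, by omega⟩
  | succ m ih =>
    by_cases hxm : x ≤ f m
    · exact ih hxm
    · exact ⟨m + 1, by have := hf m; omega⟩

lemma Fin.exists_perm_lt_iff_of_injective {n : ℕ} {α : Type*} [LinearOrder α] {f : Fin n → α}
    (hf : Function.Injective f) :
    ∃ v : Equiv.Perm (Fin n), ∀ p q, v p < v q ↔ f p < f q := by
  let σ := Tuple.sort f
  have hσ : StrictMono (f ∘ σ) :=
    (Tuple.monotone_sort f).strictMono_of_injective (hf.comp σ.injective)
  refine ⟨σ.symm, fun p q => ?_⟩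
  conv_rhs => rw [← σ.apply_symm_apply p, ← σ.apply_symm_apply q]
  exact hσ.lt_iff_lt.symm

namespace LehmerCode

variable {n : ℕ}

def invSet (w : Equiv.Perm (Fin n)) (i : Fin n) : Finset (Fin n) :=
  {k | i < k ∧ w k < w i}

def invSetBelow (w : Equiv.Perm (Fin n)) (i : Fin n) (t : ℕ) : Finset (Fin n) :=
  (invSet w i).filter fun k : Fin n => (k : ℕ) < t

def invCount (w : Equiv.Perm (Fin n)) (i : Fin n) (t : ℕ) : ℕ :=
  #(invSetBelow w i t)

lemma mem_invSet {w : Equiv.Perm (Fin n)} {i k : Fin n} :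
    k ∈ invSet w i ↔ i < k ∧ w k < w i := by
  simp [invSet]

lemma mem_Invs {w : Equiv.Perm (Fin n)} {p : Fin n × Fin n} :
    p ∈ Invs w ↔ p.1 < p.2 ∧ w p.2 < w p.1 := by
  simp [Invs]

lemma lt_of_leftWeak {v w : Equiv.Perm (Fin n)} (hvw : leftWeak v w) {p q : Fin n} (hpq : p < q)
    (hv : v q < v p) : w q < w p :=
  (mem_Invs.1 (hvw ((mem_Invs (p := (p, q))).2 ⟨hpq, hv⟩))).2

lemma filter_Invs_fst_eq (w : Equiv.Perm (Fin n)) (i : Fin n) :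
    {p ∈ Invs w | p.1 = i} = (invSet w i).map ⟨Prod.mk i, Prod.mk_right_injective i⟩ := by
  ext ⟨a, b⟩
  simp only [mem_filter, mem_Invs, mem_map, mem_invSet, Function.Embedding.coeFn_mk,
    Prod.mk.injEq]
  constructor
  · rintro ⟨h, rfl⟩
    exact ⟨b, h, rfl, rfl⟩
  · rintro ⟨b, h, rfl, rfl⟩
    exact ⟨h, rfl⟩

lemma lehmer_eq_card_invSet (w : Equiv.Perm (Fin n)) (i : Fin n) :
    lehmer w i = #(invSet w i) := by
  rw [lehmer, filter_Invs_fst_eq, card_map]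

lemma mext_eq_invCount (w : Equiv.Perm (Fin n)) (i : Fin n) (j : Fin (n + 1)) :
    mext w i j = invCount w i j := by
  rw [mext, ← filter_filter, filter_Invs_fst_eq, filter_map, card_map, invCount, invSetBelow]
  rfl

lemma invCount_of_le (w : Equiv.Perm (Fin n)) (i : Fin n) {t : ℕ} (ht : n ≤ t) :
    invCount w i t = lehmer w i := by
  rw [invCount, invSetBelow, lehmer_eq_card_invSet,
    filter_true_of_mem fun k _ => k.isLt.trans_le ht]

lemma invCount_of_le_self (w : Equiv.Perm (Fin n)) (i : Fin n) {t : ℕ} (ht : t ≤ i) :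
    invCount w i t = 0 := by
  rw [invCount, invSetBelow, card_eq_zero, filter_eq_empty_iff]
  intro k hk
  have : (i : ℕ) < k := (mem_invSet.1 hk).1
  omega

lemma invCount_mono (w : Equiv.Perm (Fin n)) (i : Fin n) : Monotone (invCount w i) :=
  fun _ _ hst => card_le_card <| monotone_filter_right _ fun _ _ hk => hk.trans_le hst

lemma invCount_succ_le (w : Equiv.Perm (Fin n)) (i : Fin n) (t : ℕ) :
    invCount w i (t + 1) ≤ invCount w i t + 1 := by
  let S := invSet w i
  calc #(S.filter fun k : Fin n => (k : ℕ) < t + 1)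
      ≤ #(invSetBelow w i t ∪ S.filter fun k : Fin n => (k : ℕ) = t) :=
        card_le_card fun k hk => by
          rw [mem_filter] at hk
          rcases Nat.lt_succ_iff_lt_or_eq.1 hk.2 with h | h
          exacts [mem_union_left _ (mem_filter.2 ⟨hk.1, h⟩),
            mem_union_right _ (mem_filter.2 ⟨hk.1, h⟩)]
    _ ≤ invCount w i t + #(S.filter fun k : Fin n => (k : ℕ) = t) := card_union_le _ _
    _ ≤ invCount w i t + 1 := by
        gcongr
        exact card_le_one.2 fun a ha b hb =>
          Fin.ext ((mem_filter.1 ha).2.trans (mem_filter.1 hb).2.symm)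

lemma exists_invCount_eq {w : Equiv.Perm (Fin n)} {i : Fin n} {x : ℕ} (hx : x ≤ lehmer w i) :
    ∃ t, invCount w i t = x :=
  Nat.exists_eq_of_le_of_succ_le_add_one (invCount_of_le_self w i (Nat.zero_le _))
    (invCount_succ_le w i) (hx.trans_eq (invCount_of_le w i le_rfl).symm)

lemma invCount_min (w : Equiv.Perm (Fin n)) (i : Fin n) (s t : ℕ) :
    invCount w i (min s t) = min (invCount w i s) (invCount w i t) :=
  (invCount_mono w i).map_min

lemma card_filter_lt_invSetBelow {w : Equiv.Perm (Fin n)} {i j : Fin n} (t : ℕ)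
    (hj : j ∉ invSet w i) :
    #((invSetBelow w i t).filter (j < ·)) = invCount w i t - invCount w i j := by
  have hsplit := card_filter_add_card_filter_not (s := invSetBelow w i t) (j < ·)
  have hbelow : (invSetBelow w i t).filter (¬ j < ·) = invSetBelow w i (min t j) := by
    ext k
    simp only [invSetBelow, mem_filter, not_lt]
    have : k ∈ invSet w i → (k : ℕ) ≠ j := fun hk hkj => hj (Fin.ext hkj ▸ hk)
    constructor
    · rintro ⟨⟨hk, hkt⟩, hkj⟩
      exact ⟨hk, lt_min hkt (lt_of_le_of_ne hkj (this hk))⟩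
    · rintro ⟨hk, hkt⟩
      exact ⟨⟨hk, hkt.trans_le (min_le_left _ _)⟩, (hkt.trans_le (min_le_right _ _)).le⟩
  rw [hbelow, ← invCount, invCount_min, ← invCount] at hsplit
  omega

lemma invSet_subset_union {v w : Equiv.Perm (Fin n)} (hvw : leftWeak v w) {i j : Fin n}
    (hij : i ≤ j) (hw : w i ≤ w j) :
    invSet v i ⊆ invSet v j ∪ invSetBelow w i j := by
  intro k hk
  obtain ⟨hik, hvk⟩ := mem_invSet.1 hk
  have hwk : w k < w i := lt_of_leftWeak hvw hik hvk
  simp only [invSetBelow, mem_union, mem_filter, mem_invSet]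
  rcases lt_trichotomy k j with hkj | rfl | hjk
  · exact Or.inr ⟨⟨hik, hwk⟩, hkj⟩
  · exact absurd hw (not_le.2 hwk)
  · have hvij : v i ≤ v j := by
      rcases hij.eq_or_lt with rfl | hij
      · exact le_rfl
      · exact not_lt.1 fun hvji => not_lt.2 hw (lt_of_leftWeak hvw hij hvji)
    exact Or.inl ⟨hjk, hvk.trans_le hvij⟩

lemma bmin_le_lehmer {v w : Equiv.Perm (Fin n)} (hvw : leftWeak v w) (i : Fin n) :
    bmin w i (lehmer v i) ≤ lehmer v := by
  intro j
  simp only [bmin]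
  split_ifs with h
  · rw [mext_eq_invCount, Fin.val_castSucc, tsub_le_iff_right, lehmer_eq_card_invSet,
      lehmer_eq_card_invSet, invCount]
    exact (card_le_card (invSet_subset_union hvw h.1 h.2)).trans (card_union_le _ _)
  · exact Nat.zero_le _

lemma bmin_le_of_mem_codeSet {w : Equiv.Perm (Fin n)} {i : Fin n} {y : Fin n → ℕ}
    (hy : y ∈ codeSet w) : bmin w i (y i) ≤ y := by
  obtain ⟨v, hvw, rfl⟩ := hy
  exact bmin_le_lehmer hvw i

lemma bmin_apply_self (w : Equiv.Perm (Fin n)) (i : Fin n) (x : ℕ) : bmin w i x i = x := by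
  simp [bmin, mext_eq_invCount, invCount_of_le_self]

section ShuffleKey

variable (w : Equiv.Perm (Fin n)) (i : Fin n) (t : ℕ)

-- Sorting positions by this key moves those in `invSetBelow w i t`, in order, to just before `i`;
-- the second coordinate `n` exceeds every position.
def shuffleKey (p : Fin n) : ℕ ×ₗ ℕ :=
  if p ∈ invSetBelow w i t then toLex ((i : ℕ), (p : ℕ)) else toLex ((p : ℕ), n)

lemma lt_of_mem_invSetBelow {k : Fin n} (hk : k ∈ invSetBelow w i t) : i < k :=
  (mem_invSet.1 (mem_filter.1 hk).1).1

lemma shuffleKey_injective : Function.Injective (shuffleKey w i t) := by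
  intro p q h
  have hp := lt_of_mem_invSetBelow w i t (k := p)
  have hq := lt_of_mem_invSetBelow w i t (k := q)
  simp only [shuffleKey] at h
  split_ifs at h <;> simp only [toLex_inj, Prod.mk.injEq] at h <;> omega

lemma shuffleKey_lt_iff {p q : Fin n} (hpq : p < q) :
    shuffleKey w i t q < shuffleKey w i t p ↔
      q ∈ invSetBelow w i t ∧ p ∉ invSetBelow w i t ∧ i ≤ p := by
  have hp := lt_of_mem_invSetBelow w i t (k := p)
  simp only [shuffleKey]
  split_ifs <;> simp only [Prod.Lex.toLex_lt_toLex] <;> simp_all <;> omega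

end ShuffleKey

section Shuffle

variable {w v : Equiv.Perm (Fin n)} {i : Fin n} {t : ℕ}
  (hv : ∀ p q, p < q →
    (v q < v p ↔ q ∈ invSetBelow w i t ∧ p ∉ invSetBelow w i t ∧ i ≤ p))
include hv

lemma leftWeak_of_lt_iff : leftWeak v w := by
  rintro ⟨p, q⟩ hpq
  obtain ⟨hpq, hvqp⟩ := mem_Invs.1 hpq
  obtain ⟨hq, hp, hip⟩ := (hv p q hpq).1 hvqp
  obtain ⟨⟨-, hwq⟩, hqt⟩ := mem_filter.1 hq |>.imp_left mem_invSet.1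
  refine mem_Invs.2 ⟨hpq, ?_⟩
  rcases hip.eq_or_lt with rfl | hip
  · exact hwq
  · -- `invSetBelow w i t` is an initial segment of `invSet w i`, so `p ∉ invSet w i`
    have hpt : (p : ℕ) < t := (show (p : ℕ) < q from hpq).trans hqt
    have hwp : w i ≤ w p :=
      not_lt.1 fun hwp => hp (mem_filter.2 ⟨mem_invSet.2 ⟨hip, hwp⟩, hpt⟩)
    exact hwq.trans_le hwp

lemma mem_invSet_of_lt_iff {j q : Fin n} :
    q ∈ invSet v j ↔
      j < q ∧ q ∈ invSetBelow w i t ∧ j ∉ invSetBelow w i t ∧ i ≤ j := by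
  rw [mem_invSet]
  exact ⟨fun ⟨hjq, hvq⟩ => ⟨hjq, (hv j q hjq).1 hvq⟩,
    fun ⟨hjq, h⟩ => ⟨hjq, (hv j q hjq).2 h⟩⟩

lemma lehmer_eq_bmin_of_lt_iff : lehmer v = bmin w i (invCount w i t) := by
  funext j
  rw [lehmer_eq_card_invSet]
  simp only [bmin, mext_eq_invCount, Fin.val_castSucc]
  split_ifs with hj
  · have hjS : j ∉ invSet w i := fun h => (not_lt.2 hj.2) (mem_invSet.1 h).2
    have hjA : j ∉ invSetBelow w i t := fun h => hjS (mem_filter.1 h).1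
    rw [← card_filter_lt_invSetBelow t hjS]
    congr 1
    ext q
    rw [mem_invSet_of_lt_iff hv, mem_filter]
    exact ⟨fun h => ⟨h.2.1, h.1⟩, fun h => ⟨h.2, h.1, hjA, hj.1⟩⟩
  · rw [card_eq_zero, eq_empty_iff_forall_notMem]
    intro q hq
    obtain ⟨hjq, hqA, hjA, hij⟩ := (mem_invSet_of_lt_iff hv).1 hq
    have hwj : w j < w i := not_le.1 fun h => hj ⟨hij, h⟩
    rcases hij.eq_or_lt with rfl | hij
    · exact lt_irrefl _ hwj
    have hjt : t ≤ j :=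
      not_lt.1 fun hjt => hjA (mem_filter.2 ⟨mem_invSet.2 ⟨hij, hwj⟩, hjt⟩)
    have hqt : (q : ℕ) < t := (mem_filter.1 hqA).2
    omega

end Shuffle

lemma exists_leftWeak_lehmer_eq_bmin (w : Equiv.Perm (Fin n)) (i : Fin n) (t : ℕ) :
    ∃ v, leftWeak v w ∧ lehmer v = bmin w i (invCount w i t) := by
  obtain ⟨v, hv⟩ := Fin.exists_perm_lt_iff_of_injective (shuffleKey_injective w i t)
  have hinv : ∀ p q, p < q →
      (v q < v p ↔ q ∈ invSetBelow w i t ∧ p ∉ invSetBelow w i t ∧ i ≤ p) :=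
    fun p q hpq => (hv q p).trans (shuffleKey_lt_iff w i t hpq)
  exact ⟨v, leftWeak_of_lt_iff hinv, lehmer_eq_bmin_of_lt_iff hinv⟩

lemma bmin_mem_codeSet {w : Equiv.Perm (Fin n)} {i : Fin n} {x : ℕ} (hx : x ≤ lehmer w i) :
    bmin w i x ∈ codeSet w := by
  obtain ⟨t, rfl⟩ := exists_invCount_eq hx
  exact exists_leftWeak_lehmer_eq_bmin w i t

end LehmerCode

theorem bmin_unique_minimal_general {n : ℕ} (w : Equiv.Perm (Fin n)) (i : Fin n) (x : ℕ)
    (hx2 : x ≤ lehmer w i) :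
    (∀ y ∈ codeSet w, y i = x → bmin w i x ≤ y) ∧
    bmin w i x ∈ codeSet w ∧
    (∀ z ∈ codeSet w, z i = x →
      (∀ y ∈ codeSet w, y i = x → ¬ y < z) → z = bmin w i x) := by
  have hle : ∀ y ∈ codeSet w, y i = x → bmin w i x ≤ y := fun y hy hyi =>
    hyi ▸ LehmerCode.bmin_le_of_mem_codeSet hy
  have hmem := LehmerCode.bmin_mem_codeSet hx2
  refine ⟨hle, hmem, fun z hz hzi hmin => ?_⟩
  exact ((hle z hz hzi).lt_or_eq.resolve_left (hmin _ hmem (LehmerCode.bmin_apply_self w i x))).symm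

/-- Lemma 4.4: for `i ∈ [n]` and `1 ≤ x ≤ c_i(w)`, every `y ∈ c(Λ_w)` with `i`-th
coordinate `x` satisfies `b_{i,x}(w) ≤ y` in the product order; hence `b_{i,x}(w)` is
the unique minimal element of `c(Λ_w)` whose `i`-th coordinate is `x`. -/
theorem bmin_unique_minimal {n : ℕ} (w : Equiv.Perm (Fin n)) (i : Fin n) (x : ℕ)
    (hx1 : 1 ≤ x) (hx2 : x ≤ lehmer w i) :
    (∀ y ∈ codeSet w, y i = x → bmin w i x ≤ y) ∧
    bmin w i x ∈ codeSet w ∧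
    (∀ z ∈ codeSet w, z i = x →
      (∀ y ∈ codeSet w, y i = x → ¬ y < z) → z = bmin w i x) :=
  bmin_unique_minimal_general w i x hx2
end

section
/- Let w ∈ S_n, let 1 ≤ i ≤ n, and let 1 ≤ x, y ≤ c_i(w). Then b_{i,x}(w) ≤ b_{i,y}(w) in the product order if and only if x ≤ y. In particular, each set C_i(w) = {b_{i,x}(w) : 1 ≤ x ≤ c_i(w)} is a chain under the product order. -/
/-
Coordinate `i` of `b_{i,x}(w)` is `x` itself, and every coordinate is either `0` or `x - m`
for an `m` independent of `x`; so `x ↦ b_{i,x}(w)` is strictly monotone, which gives both claims.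
-/

section bmin

variable {n : ℕ} (w : Equiv.Perm (Fin n)) (i : Fin n)

lemma mext_castSucc_self : mext w i i.castSucc = 0 := by
  rw [mext, Finset.card_eq_zero, Finset.filter_eq_empty_iff]
  rintro ⟨a, b⟩ hab ⟨rfl, hb⟩
  simp only [Invs, Finset.mem_filter, Fin.lt_def] at hab
  simp only [Fin.val_castSucc] at hb
  omega

lemma bmin_apply_self (x : ℕ) : bmin w i x i = x := by
  simp [bmin, mext_castSucc_self]

lemma bmin_monotone : Monotone (bmin w i) := fun x y hxy j => by
  unfold bmin
  split
  · exact Nat.sub_le_sub_right hxy _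
  · exact le_rfl

lemma bmin_strictMono : StrictMono (bmin w i) :=
  (bmin_monotone w i).strictMono_of_injective fun x y h => by
    simpa only [bmin_apply_self] using congrFun h i

end bmin

/-- Definition 4.8 / Lemma 4.9: for `1 ≤ x, y ≤ c_i(w)` one has
`b_{i,x}(w) ≤ b_{i,y}(w)` iff `x ≤ y`; in particular each
`C_i(w) = {b_{i,x}(w) : 1 ≤ x ≤ c_i(w)}` is a chain in the product order. -/
theorem bmin_chain {n : ℕ} (w : Equiv.Perm (Fin n)) (i : Fin n) :
    (∀ x y : ℕ, 1 ≤ x → x ≤ lehmer w i → 1 ≤ y → y ≤ lehmer w i →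
      (bmin w i x ≤ bmin w i y ↔ x ≤ y)) ∧
    IsChain (· ≤ ·)
      {z : Fin n → ℕ | ∃ x : ℕ, 1 ≤ x ∧ x ≤ lehmer w i ∧ z = bmin w i x} :=
  ⟨fun _ _ _ _ _ _ => (bmin_strictMono w i).le_iff_le,
    (bmin_monotone w i).isChain_range.mono fun _ ⟨x, _, _, hz⟩ => Set.mem_range.mpr ⟨x, hz.symm⟩⟩
end

section
/- Let w ∈ S_n, suppose (i,j) ∈ ninv(w) with j ≤ n, and let 1 ≤ x ≤ c_i(w) and 1 ≤ y ≤ c_j(w). Then b_{j,y}(w) ≤ b_{i,x}(w) in the product order if and only if y ≤ x − m_{i,j}(w). -/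
/-! If `(i, j)` is a non-inversion, then every inversion `(i, l)` with `l < k` either has
`l < j`, or has `l > j` and is then also an inversion `(j, l)`; hence
`m_{i,k} ≤ m_{i,j} + m_{j,k}`. Since non-inversions compose, the support of `b_{j,y}` lies in
that of `b_{i,x}`, and together with `m_{j,j} = 0` this makes the `j`-th coordinate
of `b_{j,y} ≤ b_{i,x}` equivalent to the whole inequality. -/

section ExtendedLehmerCode

variable {n : ℕ} (w : Equiv.Perm (Fin n))

lemma mem_ninvs_castSucc_iff {i j : Fin n} :
    (i, j.castSucc) ∈ Ninvs w ↔ i ≤ j ∧ w i ≤ w j := by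
  rw [Ninvs, Finset.mem_filter]
  simp only [Finset.mem_univ, true_and, wval, Fin.val_castSucc, j.isLt, dite_true, Fin.eta]
  rfl

lemma mext_eq_card (i : Fin n) (j : Fin (n + 1)) :
    mext w i j = (Finset.univ.filter
      (fun l : Fin n => i < l ∧ (l : ℕ) < (j : ℕ) ∧ w l < w i)).card := by
  refine Finset.card_bij (fun p _ => p.2) ?_ ?_ ?_
  · rintro ⟨a, l⟩ hp
    simp only [Invs, Finset.mem_filter, Finset.mem_univ, true_and] at hp ⊢
    obtain ⟨⟨hal, hwl⟩, rfl, hlj⟩ := hp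
    exact ⟨hal, hlj, hwl⟩
  · rintro p hp q hq hpq
    simp only [Invs, Finset.mem_filter, Finset.mem_univ, true_and] at hp hq
    exact Prod.ext (hp.2.1.trans hq.2.1.symm) hpq
  · intro l hl
    simp only [Finset.mem_filter, Finset.mem_univ, true_and] at hl
    exact ⟨(i, l), by simp [Invs, hl], rfl⟩

lemma mext_castSucc_self_s14 (j : Fin n) : mext w j j.castSucc = 0 := by
  rw [mext_eq_card, Finset.card_eq_zero, Finset.filter_eq_empty_iff]
  rintro l - ⟨hjl, hlj, -⟩
  exact absurd hlj (not_lt.mpr (Fin.le_def.mp hjl.le))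

lemma mext_le_mext_add_mext {i j : Fin n} (hij : w i ≤ w j) (k : Fin (n + 1)) :
    mext w i k ≤ mext w i j.castSucc + mext w j k := by
  simp only [mext_eq_card, Fin.val_castSucc]
  refine (Finset.card_le_card fun l hl => ?_).trans (Finset.card_union_le _ _)
  simp only [Finset.mem_filter, Finset.mem_univ, true_and, Finset.mem_union] at hl ⊢
  obtain ⟨hil, hlk, hwl⟩ := hl
  rcases lt_or_ge (l : ℕ) j with hlj | hjl
  · exact Or.inl ⟨hil, hlj, hwl⟩
  · have hjl' : j < l := lt_of_le_of_ne (Fin.le_def.mpr hjl) (by rintro rfl; exact hij.not_gt hwl)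
    exact Or.inr ⟨hjl', hlk, hwl.trans_le hij⟩

end ExtendedLehmerCode

lemma bmin_self {n : ℕ} (w : Equiv.Perm (Fin n)) (j : Fin n) (y : ℕ) : bmin w j y j = y := by
  simp [bmin, mext_castSucc_self_s14]

lemma bmin_le_bmin_iff {n : ℕ} (w : Equiv.Perm (Fin n)) {i j : Fin n} (hij : i ≤ j)
    (hwij : w i ≤ w j) (x y : ℕ) :
    bmin w j y ≤ bmin w i x ↔ y ≤ x - mext w i j.castSucc := by
  have hi_j : (i : ℕ) ≤ j ∧ (w i : ℕ) ≤ w j := ⟨hij, hwij⟩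
  refine ⟨fun h => ?_, fun h k => ?_⟩
  · have hj := h j
    rwa [bmin_self, bmin, if_pos hi_j] at hj
  simp only [bmin]
  split_ifs with hjk hik hik
  · calc y - mext w j k.castSucc
        ≤ x - mext w i j.castSucc - mext w j k.castSucc := Nat.sub_le_sub_right h _
      _ = x - (mext w i j.castSucc + mext w j k.castSucc) := Nat.sub_sub _ _ _
      _ ≤ x - mext w i k.castSucc := Nat.sub_le_sub_left (mext_le_mext_add_mext w hwij _) _
  · exact absurd ⟨hi_j.1.trans hjk.1, hi_j.2.trans hjk.2⟩ hik
  all_goals exact Nat.zero_le _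

theorem bmin_le_iff_general {n : ℕ} (w : Equiv.Perm (Fin n)) (i j : Fin n)
    (hninv : (i, j.castSucc) ∈ Ninvs w) (x y : ℕ) :
    bmin w j y ≤ bmin w i x ↔ y ≤ x - mext w i j.castSucc := by
  obtain ⟨hij, hwij⟩ := (mem_ninvs_castSucc_iff w).mp hninv
  exact bmin_le_bmin_iff w hij hwij x y

/-- Lemma 4.12: if `(i,j) ∈ ninv(w)` with `j ≤ n`, `1 ≤ x ≤ c_i(w)` and
`1 ≤ y ≤ c_j(w)`, then `b_{j,y}(w) ≤ b_{i,x}(w)` iff `y ≤ x - m_{i,j}(w)`. -/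
theorem bmin_le_iff {n : ℕ} (w : Equiv.Perm (Fin n)) (i j : Fin n)
    (hninv : (i, j.castSucc) ∈ Ninvs w) (x y : ℕ)
    (hx1 : 1 ≤ x) (hx2 : x ≤ lehmer w i) (hy1 : 1 ≤ y) (hy2 : y ≤ lehmer w j) :
    bmin w j y ≤ bmin w i x ↔ y ≤ x - mext w i j.castSucc :=
  bmin_le_iff_general w i j hninv x y
end
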